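/- Set y := q + ε·[p]_{q^{p^α}} ∈ R. For every integer n ≥ 0 one has [p]_{y^{p^{n+α}}} = [p]_{q^{p^{n+α}}} · (1 + ε·[p^n]_{q^{p^α}} · ∑_{i=1}^{p−1} q^{i·p^{n+α}−1}·[i·p^α]_{q^{p^{α+n+1}}}) in R. In particular (the case n = 0), [p]_{y^{p^α}} lies in the ideal of R generated by d = [p]_{q^{p^α}}, so the map q ↦ y induces ring homomorphisms A/(d^n) → R/(d^n) for all n. -/

import Mathlib

/-!
Write `t = q^{p^α}`. From `ε² = q(t − 1)ε` and `(t − 1)[m]_t = t^m − 1`, induction on `m` gives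
`y^m = q^m + ε q^{m−1} [mp]_t`; summing, `[p]_{y^N} = [p]_{q^N} + ε ∑_{i<p} q^{iN−1} [iNp]_t`.
For `N = p^{n+α}`, applying `[ab]_t = [a]_t [b]_{t^a}` twice to `iNp = p^n · p · ip^α` splits off
the factors `[p^n]_t` and `[p]_{q^N}` from every summand.
-/

open Finset

/-- The q-analogue `[n]_t = ∑_{i=0}^{n-1} t^i`. -/
def qan {A : Type*} [CommRing A] (t : A) (n : ℕ) : A := ∑ i ∈ Finset.range n, t ^ i

/-- `A := W(k)⟦q−1⟧`, the power series ring over the `p`-typical Witt vectors of `k`;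
`q` denotes `1` plus the power series variable. -/
noncomputable def qq (p : ℕ) [Fact p.Prime] (k : Type*) [CommRing k] :
    PowerSeries (WittVector p k) :=
  1 + PowerSeries.X

/-- The distinguished element `d := [p]_{q^{p^α}}` of `A`. -/
noncomputable def dd (p α : ℕ) [Fact p.Prime] (k : Type*) [CommRing k] :
    PowerSeries (WittVector p k) :=
  qan ((qq p k) ^ p ^ α) p

/-- The polynomial `ε² − q·(q^{p^α}−1)·ε` over `A`, whose adjunction defines `R`. -/
noncomputable def relPoly (p α : ℕ) [Fact p.Prime] (k : Type*) [CommRing k] :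
    Polynomial (PowerSeries (WittVector p k)) :=
  Polynomial.X ^ 2 - Polynomial.C (qq p k * ((qq p k) ^ p ^ α - 1)) * Polynomial.X

/-- `R := A[ε]/(ε² − q·(q^{p^α}−1)·ε)`, a free `A`-module with basis `1, ε`. -/
noncomputable abbrev Rring (p α : ℕ) [Fact p.Prime] (k : Type*) [CommRing k] :=
  AdjoinRoot (relPoly p α k)

/-- `ε ∈ R`. -/
noncomputable def eps (p α : ℕ) [Fact p.Prime] (k : Type*) [CommRing k] : Rring p α k :=
  AdjoinRoot.root (relPoly p α k)

/-- `y := q + ε·[p]_{q^{p^α}} ∈ R`. -/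
noncomputable def yy (p α : ℕ) [Fact p.Prime] (k : Type*) [CommRing k] : Rring p α k :=
  algebraMap _ _ (qq p k) + eps p α k * algebraMap _ _ (dd p α k)

section QAnalogue

variable {S : Type*} [CommRing S]

lemma qan_add (t : S) (a b : ℕ) : qan t (a + b) = qan t a + t ^ a * qan t b := by
  simp only [qan, sum_range_add, mul_sum, pow_add]

lemma qan_mul (t : S) (a b : ℕ) : qan t (a * b) = qan t a * qan (t ^ a) b := by
  induction b with
  | zero => simp [qan]
  | succ b ih =>
    rw [Nat.mul_succ, qan_add, ih, qan_add (t ^ a) b 1, pow_mul]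
    simp only [qan, range_one, sum_singleton, pow_zero]
    ring

lemma map_qan {T : Type*} [CommRing T] (f : S →+* T) (t : S) (n : ℕ) :
    f (qan t n) = qan (f t) n := by
  simp only [qan, map_sum, map_pow]

lemma qan_pow_pow_mul_mul (q : S) (p α n i : ℕ) :
    qan (q ^ p ^ α) (i * p ^ (n + α) * p) =
      qan (q ^ p ^ α) (p ^ n) * qan (q ^ p ^ (n + α)) p * qan (q ^ p ^ (α + n + 1)) (i * p ^ α) := by
  have hexp : i * p ^ (n + α) * p = p ^ n * (p * (i * p ^ α)) := by ring
  have h₁ : (q ^ p ^ α) ^ p ^ n = q ^ p ^ (n + α) := by rw [← pow_mul, ← pow_add, add_comm]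
  have h₂ : (q ^ p ^ (n + α)) ^ p = q ^ p ^ (α + n + 1) := by
    rw [← pow_mul, ← pow_succ, add_comm n α]
  rw [hexp, qan_mul, h₁, qan_mul, h₂, mul_assoc]

end QAnalogue

lemma sum_Icc_one_pred_eq_sum_range {M : Type*} [AddCommMonoid M] (f : ℕ → M) (h₀ : f 0 = 0)
    (n : ℕ) : ∑ i ∈ Icc 1 (n - 1), f i = ∑ i ∈ range n, f i := by
  refine sum_subset (fun i hi => ?_) (fun i hi hi' => ?_)
  · simp only [mem_Icc, mem_range] at hi ⊢
    omega
  · obtain rfl : i = 0 := by simp only [mem_Icc, mem_range] at hi hi'; omega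
    exact h₀

section DeformedPowers

variable {S : Type*} [CommRing S] {q t e : S}

lemma pow_succ_add_mul_qan (he : e ^ 2 = q * (t - 1) * e) (p m : ℕ) :
    (q + e * qan t p) ^ (m + 1) = q ^ (m + 1) + e * (q ^ m * qan t ((m + 1) * p)) := by
  induction m with
  | zero => simp
  | succ m ih =>
    have hadd : qan t ((m + 1 + 1) * p) = qan t ((m + 1) * p) + t ^ ((m + 1) * p) * qan t p := by
      rw [← qan_add]; ring_nf
    have hgeom : qan t ((m + 1) * p) * (t - 1) = t ^ ((m + 1) * p) - 1 := geom_sum_mul _ _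
    rw [pow_succ, ih, hadd]
    linear_combination (q ^ m * qan t ((m + 1) * p) * qan t p) * he +
      (e * q ^ (m + 1) * qan t p) * hgeom

-- At `m = 0` the truncated exponent `m - 1` is harmless because `[0]_t = 0`.
lemma pow_add_mul_qan (he : e ^ 2 = q * (t - 1) * e) (p m : ℕ) :
    (q + e * qan t p) ^ m = q ^ m + e * (q ^ (m - 1) * qan t (m * p)) := by
  rcases m with _ | m
  · simp [qan]
  · exact pow_succ_add_mul_qan he p m

lemma qan_pow_add_mul_qan (he : e ^ 2 = q * (t - 1) * e) (p N P : ℕ) :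
    qan ((q + e * qan t p) ^ N) P =
      qan (q ^ N) P + e * ∑ i ∈ range P, q ^ (i * N - 1) * qan t (i * N * p) := by
  calc qan ((q + e * qan t p) ^ N) P
      = ∑ i ∈ range P, (q ^ (i * N) + e * (q ^ (i * N - 1) * qan t (i * N * p))) :=
        sum_congr rfl fun i _ => by rw [← pow_mul', pow_add_mul_qan he]
    _ = _ := by
        rw [sum_add_distrib, ← mul_sum]
        exact congrArg (· + _) (sum_congr rfl fun i _ => pow_mul' q i N)

end DeformedPowers

lemma eps_sq (p α : ℕ) [Fact p.Prime] (k : Type*) [CommRing k] :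
    eps p α k ^ 2 = algebraMap _ _ (qq p k) * (algebraMap _ _ (qq p k) ^ p ^ α - 1) * eps p α k := by
  have h := AdjoinRoot.eval₂_root (relPoly p α k)
  unfold relPoly at h
  simp only [Polynomial.eval₂_sub, Polynomial.eval₂_mul, Polynomial.eval₂_pow,
    Polynomial.eval₂_X, Polynomial.eval₂_C, sub_eq_zero] at h
  rw [← map_pow, ← map_one (algebraMap (PowerSeries (WittVector p k)) (Rring p α k)), ← map_sub,
    ← map_mul, AdjoinRoot.algebraMap_eq, eps]
  exact h

lemma yy_eq (p α : ℕ) [Fact p.Prime] (k : Type*) [CommRing k] :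
    yy p α k = algebraMap _ _ (qq p k) +
      eps p α k * qan (algebraMap _ (Rring p α k) (qq p k) ^ p ^ α) p := by
  rw [yy, dd, map_qan, map_pow]

lemma qan_yy_pow_pow (p α : ℕ) [Fact p.Prime] (k : Type*) [CommRing k] (n : ℕ) :
    qan ((yy p α k) ^ p ^ (n + α)) p =
      algebraMap _ (Rring p α k) (qan ((qq p k) ^ p ^ (n + α)) p) *
        (1 + eps p α k *
          algebraMap _ _ (qan ((qq p k) ^ p ^ α) (p ^ n) *
            ∑ i ∈ Icc 1 (p - 1),
              (qq p k) ^ (i * p ^ (n + α) - 1) * qan ((qq p k) ^ p ^ (α + n + 1)) (i * p ^ α))) := by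
  rw [yy_eq, qan_pow_add_mul_qan (eps_sq p α k),
    ← sum_Icc_one_pred_eq_sum_range _ (by simp [qan])]
  simp only [map_mul, map_sum, map_pow, map_qan, qan_pow_pow_mul_mul, mul_sum, mul_add, mul_one]
  exact congrArg (_ + ·) (sum_congr rfl fun i _ => by ring)

theorem stmt1 (p : ℕ) [Fact p.Prime] (α : ℕ)
    (k : Type*) [Field k] :
    (∀ n : ℕ,
      qan ((yy p α k) ^ p ^ (n + α)) p =
        algebraMap _ (Rring p α k) (qan ((qq p k) ^ p ^ (n + α)) p) *
          (1 + eps p α k *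
            algebraMap _ _ (qan ((qq p k) ^ p ^ α) (p ^ n) *
              ∑ i ∈ Finset.Icc 1 (p - 1),
                (qq p k) ^ (i * p ^ (n + α) - 1) *
                  qan ((qq p k) ^ p ^ (α + n + 1)) (i * p ^ α)))) ∧
    qan ((yy p α k) ^ p ^ α) p ∈
      Ideal.span {algebraMap _ (Rring p α k) (dd p α k)} := by
  have h₀ := qan_yy_pow_pow p α k 0
  rw [zero_add] at h₀
  exact ⟨qan_yy_pow_pow p α k, Ideal.mem_span_singleton.mpr ⟨_, h₀⟩⟩
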